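/- arXiv:1902.06030 — 2 statements merged into one kernel-verified Lean document; each statement's English description precedes it below -/
import Mathlib

section
/- For any infinite cardinal κ, the order dimension of the poset of finite subsets of κ ordered by inclusion is at most log₂(log₂(κ)). -/
open Cardinal

universe u

/-- `L` is a realizer of the partial order on `P`: a family of linear orders
whose intersection is exactly `≤`. -/
def IsRealizer (P : Type u) [PartialOrder P] {ι : Type u} (L : ι → P → P → Prop) : Prop :=
  (∀ i, IsLinearOrder P (L i)) ∧ ∀ x y : P, x ≤ y ↔ ∀ i, L i x y

/-- The order dimension of a partial order: the least cardinality of a realizer. -/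
noncomputable def orderDim (P : Type u) [PartialOrder P] : Cardinal.{u} :=
  sInf { c | ∃ (ι : Type u) (L : ι → P → P → Prop), #ι = c ∧ IsRealizer P L }

/-- `clog2 μ = min {λ : μ ≤ 2^λ}`. -/
noncomputable def clog2 (μ : Cardinal.{u}) : Cardinal.{u} := sInf { l | μ ≤ 2 ^ l }

/-!
If `#X ≤ 2 ^ 2 ^ μ`, choose injections `c : X → Set Θ` with `Θ` well-ordered of size `2 ^ μ`
and `e : Θ → Set Λ` with `#Λ = μ`. The `μ` pairs `(F, S)`, `F` a finite subset of `Λ` and `S` a finite set of finite subsets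
of `Λ`, give patterns `{j | e j ∩ F ∈ S}` on `Θ` realizing every prescribed finite pattern.
Flipping `c x` along a pattern and ordering lexicographically gives a linear order on `X`. Given a
finite `B` and `a ∉ B`, a pattern agreeing with `c a` at the first point where `c a` differs from
each `c x`, `x ∈ B`, puts `a` above all of `B`. Hence the `μ` induced colex orders on `Finset X`
intersect to inclusion.
-/

open Function Finset
open scoped symmDiff

section Colex

variable {X β : Type*} [LinearOrder β] [DecidableEq β]

def colexRel (f : X → β) (A B : Finset X) : Prop :=
  toColex (A.image f) ≤ toColex (B.image f)

lemma isLinearOrder_colexRel {f : X → β} (hf : Injective f) :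
    IsLinearOrder (Finset X) (colexRel f) where
  refl _ := le_rfl
  trans _ _ _ := le_trans
  antisymm _ _ h₁ h₂ := image_injective hf (toColex_inj.mp (le_antisymm h₁ h₂))
  total _ _ := le_total _ _

lemma colexRel_of_subset (f : X → β) {A B : Finset X} (h : A ⊆ B) : colexRel f A B :=
  Colex.toColex_mono (image_subset_image h)

lemma not_colexRel_of_forall_lt {f : X → β} {A B : Finset X} {a : X} (ha : a ∈ A)
    (hB : ∀ x ∈ B, f x < f a) : ¬ colexRel f A B := by
  intro h
  have hfa : f a ∉ B.image f := fun hmem => by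
    obtain ⟨x, hx, hxa⟩ := mem_image.mp hmem
    exact (hB x hx).ne hxa
  obtain ⟨_, hb, -, hab⟩ := Colex.toColex_le_toColex.mp h (mem_image_of_mem f ha) hfa
  obtain ⟨x, hx, rfl⟩ := mem_image.mp hb
  exact (hB x hx).not_ge hab

theorem isRealizer_colexRel {X ι : Type u} (f : ι → X → β) (hf : ∀ i, Injective (f i))
    (hsep : ∀ (B : Finset X) (a : X), a ∉ B → ∃ i, ∀ x ∈ B, f i x < f i a) :
    IsRealizer (Finset X) (fun i => colexRel (f i)) := by
  refine ⟨fun i => isLinearOrder_colexRel (hf i),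
    fun A B => ⟨fun h i => colexRel_of_subset _ h, ?_⟩⟩
  intro h a ha
  by_contra haB
  obtain ⟨i, hi⟩ := hsep B a haB
  exact not_colexRel_of_forall_lt ha hi (h i)

end Colex

section XorCode

variable {Θ : Type*}

def xorCode (p s : Set Θ) : Lex (Θ → Prop) :=
  toLex fun j => (j ∈ s ↔ j ∈ p)

lemma xorCode_injective (p : Set Θ) : Injective (xorCode p) := by
  intro s t h
  ext j
  have := iff_of_eq (congrFun (congrArg ofLex h) j)
  simp only [xorCode, ofLex_toLex] at this
  tauto

/-- The witness is the least point of `s ∆ t`: the codes agree below it, whatever `p` is. -/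
lemma exists_xorCode_lt [LinearOrder Θ] [WellFoundedLT Θ] {s t : Set Θ} (h : s ≠ t) :
    ∃ j, ∀ p : Set Θ, (j ∈ p ↔ j ∈ t) → xorCode p s < xorCode p t := by
  obtain ⟨j, hj, hmin⟩ := wellFounded_lt.has_min (s ∆ t) (Set.symmDiff_nonempty.mpr h)
  refine ⟨j, fun p hp => ⟨j, fun k hk => ?_, ?_⟩⟩
  · have : k ∈ s ↔ k ∈ t := by
      by_contra hst
      exact hmin k (by rw [Set.mem_symmDiff]; tauto) hk
    simp only [xorCode, Pi.toLex_apply, this]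
  · rw [Set.mem_symmDiff] at hj
    show (j ∈ s ↔ j ∈ p) < (j ∈ t ↔ j ∈ p)
    refine lt_iff_le_not_ge.mpr ⟨fun _ => by tauto, fun hle => ?_⟩
    have : (j ∈ t ↔ j ∈ p) → (j ∈ s ↔ j ∈ p) := hle
    tauto

end XorCode

section IndependentFamily

variable {Θ Λ : Type*} {e : Θ → Set Λ}

open Classical in
/-- For injective `e`, the sets `{i | j ∈ tracePattern e i}`, `j : Θ`, form the classical
independent family on `Finset Λ × Finset (Finset Λ)`. -/
noncomputable def tracePattern (e : Θ → Set Λ) (i : Finset Λ × Finset (Finset Λ)) : Set Θ :=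
  {j | {x ∈ i.1 | x ∈ e j} ∈ i.2}

lemma exists_injOn_inter (he : Injective e) (J : Finset Θ) :
    ∃ F : Finset Λ, Set.InjOn (fun j => (F : Set Λ) ∩ e j) J := by
  classical
  have separate : ∀ j j', ∃ T : Finset Λ, (T : Set Λ) ∩ e j = (T : Set Λ) ∩ e j' → j = j' := by
    intro j j'
    by_cases hjj' : j = j'
    · exact ⟨∅, fun _ => hjj'⟩
    · obtain ⟨x, hx⟩ := Set.symmDiff_nonempty.mpr (he.ne hjj')
      refine ⟨{x}, fun h => absurd (Set.ext_iff.mp h x) ?_⟩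
      rw [Set.mem_symmDiff] at hx
      simp only [coe_singleton, Set.mem_inter_iff, Set.mem_singleton_iff, true_and]
      tauto
  choose T hT using separate
  refine ⟨(J ×ˢ J).biUnion fun q => T q.1 q.2, fun j hj j' hj' h => hT j j' ?_⟩
  have hsub : (T j j' : Set Λ) ⊆ ↑((J ×ˢ J).biUnion fun q => T q.1 q.2) :=
    coe_subset.mpr <| subset_biUnion_of_mem (fun q => T q.1 q.2)
      (mem_product.mpr ⟨hj, hj'⟩ : (j, j') ∈ J ×ˢ J)
  rw [← Set.inter_eq_left.mpr hsub, Set.inter_assoc, Set.inter_assoc]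
  exact congrArg (_ ∩ ·) h

lemma exists_tracePattern_eqOn (he : Injective e) (J : Finset Θ) (P : Set Θ) :
    ∃ i, ∀ j ∈ J, j ∈ tracePattern e i ↔ j ∈ P := by
  classical
  obtain ⟨F, hF⟩ := exists_injOn_inter he J
  have trace_eq : ∀ j, (↑({x ∈ F | x ∈ e j} : Finset Λ) : Set Λ) = (F : Set Λ) ∩ e j :=
    fun _ => by rw [coe_filter]; rfl
  refine ⟨(F, {j ∈ J | j ∈ P}.image fun j => {x ∈ F | x ∈ e j}), fun j hj => ?_⟩
  simp only [tracePattern, Set.mem_ofPred_eq, mem_image, mem_filter]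
  constructor
  · rintro ⟨j', ⟨hj', hj'P⟩, htrace⟩
    have : (F : Set Λ) ∩ e j' = (F : Set Λ) ∩ e j := by rw [← trace_eq, ← trace_eq, htrace]
    rwa [← hF hj' hj this]
  · exact fun hjP => ⟨j, ⟨hj, hjP⟩, rfl⟩

end IndependentFamily

theorem exists_isRealizer_finset {X Θ Λ : Type u} [LinearOrder Θ] [WellFoundedLT Θ]
    {c : X → Set Θ} (hc : Injective c) {e : Θ → Set Λ} (he : Injective e) :
    ∃ L : Finset Λ × Finset (Finset Λ) → Finset X → Finset X → Prop, IsRealizer (Finset X) L := by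
  classical
  refine ⟨_, isRealizer_colexRel (fun i x => xorCode (tracePattern e i) (c x))
    (fun i => (xorCode_injective _).comp hc) ?_⟩
  intro B a haB
  have hne : ∀ x ∈ B, c x ≠ c a := fun x hx hxa => haB (hc hxa ▸ hx)
  have first_diff := fun x (hx : x ∈ B) => exists_xorCode_lt (hne x hx)
  choose j hj using first_diff
  obtain ⟨i, hi⟩ :=
    exists_tracePattern_eqOn he (B.attach.image fun x : {x // x ∈ B} => j x.1 x.2) (c a)
  exact ⟨i, fun x hx => hj x hx _ (hi _ (mem_image_of_mem _ (mem_attach B ⟨x, hx⟩)))⟩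

lemma orderDim_le_mk {P : Type u} [PartialOrder P] {ι : Type u} {L : ι → P → P → Prop}
    (hL : IsRealizer P L) : orderDim P ≤ #ι :=
  csInf_le' ⟨ι, L, rfl, hL⟩

theorem orderDim_finset_le {X : Type u} {μ : Cardinal.{u}} (hμ : ℵ₀ ≤ μ)
    (hX : #X ≤ 2 ^ (2 ^ μ : Cardinal)) :
    orderDim (Finset X) ≤ μ := by
  have : Infinite μ.out := by rwa [infinite_iff, mk_out]
  obtain ⟨c⟩ : Nonempty (X ↪ Set (2 ^ μ : Cardinal).ord.ToType) := by
    rwa [← le_def, mk_set, mk_ord_toType]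
  obtain ⟨e⟩ : Nonempty ((2 ^ μ : Cardinal).ord.ToType ↪ Set μ.out) := by
    rw [← le_def, mk_set, mk_ord_toType, mk_out]
  obtain ⟨L, hL⟩ := exists_isRealizer_finset c.injective e.injective
  calc orderDim (Finset X) ≤ #(Finset μ.out × Finset (Finset μ.out)) := orderDim_le_mk hL
    _ = μ := by
      rw [mk_prod, lift_id, lift_id, mk_finset_of_infinite, mk_finset_of_infinite,
        mk_finset_of_infinite, mk_out]
      exact mul_eq_self hμ

lemma le_two_power_clog2 (μ : Cardinal.{u}) : μ ≤ 2 ^ clog2 μ :=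
  csInf_mem (s := {l | μ ≤ 2 ^ l}) ⟨μ, (cantor μ).le⟩

lemma aleph0_le_clog2 {μ : Cardinal.{u}} (hμ : ℵ₀ ≤ μ) : ℵ₀ ≤ clog2 μ := by
  by_contra! h
  exact (power_lt_aleph0 natCast_lt_aleph0 h).not_ge (hμ.trans (le_two_power_clog2 μ))

/-- Upper bound: the dimension of the finite subsets of κ under inclusion is
at most log₂(log₂ κ). -/
theorem stmt6 (κ : Cardinal.{u}) (hκ : ℵ₀ ≤ κ) :
    orderDim (Finset κ.out) ≤ clog2 (clog2 κ) := by
  refine orderDim_finset_le (aleph0_le_clog2 (aleph0_le_clog2 hκ)) ?_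
  rw [mk_out]
  exact (le_two_power_clog2 κ).trans (power_le_power_left two_ne_zero (le_two_power_clog2 _))
end

section
/- Let (P, ≤) be a partial order containing a strongly independent antichain S. Then the order dimension of (P, ≤) is at least |S|. -/
open Cardinal

universe u

def IsStronglyIndependent {P : Type u} [Preorder P] (S : Set P) : Prop :=
  ∀ T ⊆ S, #T < #S → ∀ x ∈ S \ T, ∃ y : P, (∀ t ∈ T, t ≤ y) ∧ ¬ x ≤ y

section LinearExtension

variable {P : Type u} [PartialOrder P]

/-- Gluing `{a | a ≤ y}` below `{b | x ≤ b}` keeps the order partial when `¬ x ≤ y`. -/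
lemma isPartialOrder_le_or_le_and_le {x y : P} (hxy : ¬ x ≤ y) :
    IsPartialOrder P fun a b => a ≤ b ∨ (a ≤ y ∧ x ≤ b) where
  refl _ := Or.inl le_rfl
  trans := by
    rintro a b c (hab | ⟨hay, hxb⟩) (hbc | ⟨hby, hxc⟩)
    · exact Or.inl (hab.trans hbc)
    · exact Or.inr ⟨hab.trans hby, hxc⟩
    · exact Or.inr ⟨hay, hxb.trans hbc⟩
    · exact (hxy (hxb.trans hby)).elim
  antisymm := by
    rintro a b (hab | ⟨hay, hxb⟩) (hba | ⟨hby, hxa⟩)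
    · exact hab.antisymm hba
    · exact (hxy (hxa.trans (hab.trans hby))).elim
    · exact (hxy (hxb.trans (hba.trans hay))).elim
    · exact (hxy (hxb.trans hby)).elim

lemma exists_linear_extension_not_rel {x y : P} (hxy : ¬ x ≤ y) :
    ∃ s : P → P → Prop, IsLinearOrder P s ∧ (∀ a b : P, a ≤ b → s a b) ∧ ¬ s x y := by
  have := isPartialOrder_le_or_le_and_le hxy
  obtain ⟨s, hs, hext⟩ := extend_partialOrder fun a b => a ≤ b ∨ (a ≤ y ∧ x ≤ b)
  refine ⟨s, hs, fun a b hab => hext a b (Or.inl hab), fun hsxy => hxy ?_⟩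
  have hsyx : s y x := hext y x (Or.inr ⟨le_rfl, le_rfl⟩)
  exact (hs.antisymm x y hsxy hsyx).le

lemma exists_linear_extension_separating (x y : P) :
    ∃ s : P → P → Prop, IsLinearOrder P s ∧ (∀ a b : P, a ≤ b → s a b) ∧ (¬ x ≤ y → ¬ s x y) := by
  by_cases hxy : x ≤ y
  · obtain ⟨s, hs, hext⟩ := extend_partialOrder ((· ≤ ·) : P → P → Prop)
    exact ⟨s, hs, hext, fun h => (h hxy).elim⟩
  · obtain ⟨s, hs, hext, hsxy⟩ := exists_linear_extension_not_rel hxy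
    exact ⟨s, hs, hext, fun _ => hsxy⟩

lemma exists_isRealizer : ∃ L : P × P → P → P → Prop, IsRealizer P L := by
  choose L hlin hext hsep using fun p : P × P => exists_linear_extension_separating p.1 p.2
  refine ⟨L, hlin, fun a b => ⟨fun hab p => hext p a b hab, fun hall => ?_⟩⟩
  by_contra hab
  exact hsep (a, b) hab (hall (a, b))

lemma le_orderDim {c : Cardinal.{u}}
    (h : ∀ (ι : Type u) (L : ι → P → P → Prop), IsRealizer P L → c ≤ #ι) : c ≤ orderDim P := by
  -- `sInf ∅ = 0` for cardinals, so a realizer has to be exhibited first.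
  obtain ⟨L, hL⟩ := exists_isRealizer (P := P)
  refine le_csInf ⟨#(P × P), P × P, L, rfl, hL⟩ ?_
  rintro _ ⟨ι, L, rfl, hL⟩
  exact h ι L hL

end LinearExtension

lemma mk_le_of_forall_exists_isTop {P ι : Type u} {r : ι → P → P → Prop}
    (htot : ∀ i, Std.Total (r i)) {S : Set P}
    (htop : ∀ x ∈ S, ∃ i, ∀ t ∈ S, r i x t → x = t) : #S ≤ #ι := by
  choose top htop using fun x : S => htop x x.2
  refine mk_le_of_injective (f := top) fun x x' hxx' => Subtype.ext ?_
  rcases (htot (top x)).total x x' with h | h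
  · exact htop x x' x'.2 h
  · exact (htop x' x x.2 (hxx' ▸ h)).symm

lemma mk_le_of_isRealizer {P : Type u} [PartialOrder P] {S : Set P}
    (hS : IsStronglyIndependent S) {ι : Type u} {L : ι → P → P → Prop} (hL : IsRealizer P L) :
    #S ≤ #ι := by
  obtain ⟨hlin, hiff⟩ := hL
  by_contra! hlt
  have hnotop : ∃ x ∈ S, ∀ i, ∃ t ∈ S, L i x t ∧ x ≠ t := by
    by_contra! h
    exact hlt.not_ge (mk_le_of_forall_exists_isTop (fun i => (hlin i).toTotal) h)
  obtain ⟨x, hxS, hx⟩ := hnotop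
  choose t htS hxt hne using hx
  have hxT : x ∉ Set.range t := by
    rintro ⟨i, rfl⟩
    exact hne i rfl
  obtain ⟨y, hub, hxy⟩ :=
    hS (Set.range t) (Set.range_subset_iff.2 htS) (mk_range_le.trans_lt hlt) x ⟨hxS, hxT⟩
  obtain ⟨i, hi⟩ : ∃ i, ¬ L i x y := by
    by_contra! h
    exact hxy ((hiff x y).2 h)
  exact hi ((hlin i).trans _ _ _ (hxt i) ((hiff _ _).1 (hub _ ⟨i, rfl⟩) i))

theorem stmt16_general {P : Type u} [PartialOrder P] (S : Set P)
    (hstrong : ∀ T ⊆ S, #(↥T) < #(↥S) → ∀ x ∈ S \ T,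
      ∃ y : P, (∀ t ∈ T, t ≤ y) ∧ ¬ x ≤ y) :
    #(↥S) ≤ orderDim P :=
  le_orderDim fun _ _ hL => mk_le_of_isRealizer hstrong hL

/-- If a partial order contains a strongly independent antichain S, then its
order dimension is at least |S|. -/
theorem stmt16 {P : Type u} [PartialOrder P] (S : Set P)
    (hanti : IsAntichain (· ≤ ·) S)
    (hstrong : ∀ T ⊆ S, #(↥T) < #(↥S) → ∀ x ∈ S \ T,
      ∃ y : P, (∀ t ∈ T, t ≤ y) ∧ ¬ x ≤ y) :
    #(↥S) ≤ orderDim P :=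
  stmt16_general S hstrong
end
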